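/- Let 𝔉 be a closed subset of ℂ, f : 𝔉 → ℂ continuous, δ > 0, and K ≥ 0. Then: (a) if ‖f(N)A − Af(N)‖ ≤ K for every complex Hilbert space H, every bounded normal operator N on H with spectrum in 𝔉 and every bounded self-adjoint operator A on H with ‖A‖ = 1 and ‖NA − AN‖ ≤ δ, then ‖f(N₁) − f(N₂)‖ ≤ K for all bounded normal operators N₁, N₂ (on any complex Hilbert space) with spectra in 𝔉 and ‖N₁ − N₂‖ ≤ δ; (b) conversely, if ‖f(N₁) − f(N₂)‖ ≤ K for all bounded normal operators N₁, N₂ (on any complex Hilbert space) with spectra in 𝔉 and ‖N₁ − N₂‖ ≤ δ, then ‖f(N)A − Af(N)‖ ≤ 2K for every bounded normal operator N with spectrum in 𝔉 and every bounded self-adjoint operator A with ‖A‖ = 1 and ‖NA − AN‖ ≤ δ. (In terms of the operator modulus of continuity Ω_f and the self-commutator modulus Ω_f^{SA}, this says Ω_f ≤ Ω_f^{SA} ≤ 2Ω_f.) -/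

import Mathlib

/-!
(a) For normal `N₁, N₂` on `H`, the block-diagonal operator `N₁ ⊕ N₂` on `H ⊕ H` is normal with
spectrum in `𝔉`, and its commutator with the coordinate swap (a self-adjoint unitary) is
`((N₁ - N₂) ⊕ (N₂ - N₁)) ∘ swap`. As the functional calculus acts blockwise, the commutator of
`f(N₁ ⊕ N₂)` with the swap has norm `‖f(N₁) - f(N₂)‖`.

(b) For self-adjoint `a` with `‖a‖ ≤ 1`, the Cayley transform `u = (a - 2i)(a + 2i)⁻¹` is unitary
and `[x, u] = 4i (a + 2i)⁻¹ [x, a] (a + 2i)⁻¹`. Since `‖(a + 2i)⁻¹‖ ≤ 1/2` and `‖a + 2i‖² ≤ 5`,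
`‖[x, u]‖ ≤ ‖[x, a]‖` and `4 ‖[x, a]‖ ≤ 5 ‖[x, u]‖`. Now `u N u*` is normal with the spectrum of
`N` and `‖N - u N u*‖ = ‖[N, u]‖ ≤ δ`, so `‖[f(N), u]‖ = ‖f(N) - f(u N u*)‖ ≤ K`, whence
`‖[f(N), a]‖ ≤ 5K/4 ≤ 2K`.
-/

open ContinuousLinearMap Complex

lemma IsStarNormal.prod {R S : Type*} [Mul R] [Star R] [Mul S] [Star S] {x : R} {y : S}
    (hx : IsStarNormal x) (hy : IsStarNormal y) : IsStarNormal (x, y) :=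
  ⟨Prod.ext hx.star_comm_self hy.star_comm_self⟩

lemma norm_sub_unitary_conj {A : Type*} [NormedRing A] [StarRing A] [CStarRing A] {u : A}
    (hu : u ∈ unitary A) (x : A) : ‖x - u * x * star u‖ = ‖x * u - u * x‖ := by
  have h : x - u * x * star u = (x * u - u * x) * star u := by
    rw [sub_mul, mul_assoc x, Unitary.mul_star_self_of_mem hu, mul_one]
  rw [h, CStarRing.norm_mul_mem_unitary _ (Unitary.star_mem hu)]

section BlockDiagonal

variable {H : Type*} [NormedAddCommGroup H] [InnerProductSpace ℂ H]

noncomputable def blockDiag (S T : H →L[ℂ] H) : WithLp 2 (H × H) →L[ℂ] WithLp 2 (H × H) :=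
  ((WithLp.prodContinuousLinearEquiv 2 ℂ H H).symm : (H × H) →L[ℂ] WithLp 2 (H × H)) ∘L
    S.prodMap T ∘L (WithLp.prodContinuousLinearEquiv 2 ℂ H H : WithLp 2 (H × H) →L[ℂ] (H × H))

@[simp]
lemma blockDiag_apply (S T : H →L[ℂ] H) (x : WithLp 2 (H × H)) :
    blockDiag S T x = WithLp.toLp 2 (S x.fst, T x.snd) := rfl

lemma blockDiag_injective {S T S' T' : H →L[ℂ] H} (h : blockDiag S T = blockDiag S' T') :
    S = S' ∧ T = T' := by
  constructor <;> ext x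
  · simpa using congr(($h (WithLp.toLp 2 (x, 0))).fst)
  · simpa using congr(($h (WithLp.toLp 2 (0, x))).snd)

noncomputable def withLpSwap : WithLp 2 (H × H) →L[ℂ] WithLp 2 (H × H) :=
  (LinearIsometryEquiv.withLpProdComm 2 ℂ H H).toContinuousLinearEquiv

@[simp]
lemma withLpSwap_apply (x : WithLp 2 (H × H)) :
    withLpSwap x = WithLp.toLp 2 (x.snd, x.fst) := rfl

lemma blockDiag_commutator_withLpSwap (S T : H →L[ℂ] H) :
    blockDiag S T * withLpSwap - withLpSwap * blockDiag S T =
      blockDiag (S - T) (T - S) * withLpSwap := by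
  ext x : 1
  apply WithLp.ofLp_injective
  ext <;> simp

variable [CompleteSpace H]

lemma adjoint_blockDiag (S T : H →L[ℂ] H) :
    adjoint (blockDiag S T) = blockDiag (adjoint S) (adjoint T) := by
  symm
  rw [eq_adjoint_iff]
  intro x y
  simp [WithLp.prod_inner_apply, adjoint_inner_left]

noncomputable def blockDiagStarAlgHom :
    (H →L[ℂ] H) × (H →L[ℂ] H) →⋆ₐ[ℂ] (WithLp 2 (H × H) →L[ℂ] WithLp 2 (H × H)) where
  toFun p := blockDiag p.1 p.2
  map_one' := rfl
  map_mul' _ _ := rfl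
  map_zero' := rfl
  map_add' _ _ := rfl
  commutes' _ := rfl
  map_star' p := by simp only [Prod.fst_star, Prod.snd_star, star_eq_adjoint, adjoint_blockDiag]

lemma blockDiagStarAlgHom_apply (p : (H →L[ℂ] H) × (H →L[ℂ] H)) :
    blockDiagStarAlgHom p = blockDiag p.1 p.2 := rfl

lemma norm_blockDiag (S T : H →L[ℂ] H) : ‖blockDiag S T‖ = max ‖S‖ ‖T‖ :=
  NonUnitalStarAlgHom.norm_map blockDiagStarAlgHom
    (fun _ _ h => Prod.ext_iff.mpr (blockDiag_injective h)) (S, T)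

lemma isStarNormal_blockDiag {S T : H →L[ℂ] H} (hS : IsStarNormal S) (hT : IsStarNormal T) :
    IsStarNormal (blockDiag S T) :=
  have := hS.prod hT
  IsStarNormal.map blockDiagStarAlgHom (S, T)

lemma spectrum_blockDiag_subset (S T : H →L[ℂ] H) :
    spectrum ℂ (blockDiag S T) ⊆ spectrum ℂ S ∪ spectrum ℂ T := by
  rw [← Prod.spectrum_eq]
  exact AlgHom.spectrum_apply_subset blockDiagStarAlgHom.toAlgHom (S, T)

open scoped CStarAlgebra in
lemma cfc_blockDiag (f : ℂ → ℂ) {S T : H →L[ℂ] H} (hS : IsStarNormal S) (hT : IsStarNormal T)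
    (hf : ContinuousOn f (spectrum ℂ S ∪ spectrum ℂ T)) :
    cfc f (blockDiag S T) = blockDiag (cfc f S) (cfc f T) := by
  have := hS.prod hT
  rw [← blockDiagStarAlgHom_apply (S, T),
    ← blockDiagStarAlgHom.map_cfc f (S, T) (by rwa [Prod.spectrum_eq]),
    cfc_map_prod (S := ℂ) f S T hf, blockDiagStarAlgHom_apply]

lemma withLpSwap_mem_unitary : withLpSwap ∈ unitary (WithLp 2 (H × H) →L[ℂ] WithLp 2 (H × H)) :=
  (Unitary.linearIsometryEquiv.symm (LinearIsometryEquiv.withLpProdComm 2 ℂ H H)).2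

lemma isSelfAdjoint_withLpSwap : IsSelfAdjoint (withLpSwap : WithLp 2 (H × H) →L[ℂ] _) := by
  have hsq : withLpSwap * withLpSwap = (1 : WithLp 2 (H × H) →L[ℂ] _) := ext fun _ => rfl
  rw [IsSelfAdjoint, ← mul_one (star withLpSwap), ← hsq, ← mul_assoc,
    Unitary.star_mul_self_of_mem (withLpSwap_mem_unitary (H := H)), one_mul]

lemma norm_blockDiag_commutator_withLpSwap (S T : H →L[ℂ] H) :
    ‖blockDiag S T * withLpSwap - withLpSwap * blockDiag S T‖ = ‖S - T‖ := by
  rw [blockDiag_commutator_withLpSwap,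
    CStarRing.norm_mul_mem_unitary _ (withLpSwap_mem_unitary (H := H)), norm_blockDiag,
    norm_sub_rev T, max_self]

theorem norm_cfc_sub_le_of_norm_cfc_commutator_le {F : Set ℂ} {f : ℂ → ℂ}
    (hf : ContinuousOn f F) {δ K : ℝ} (hK : 0 ≤ K)
    (hcomm : ∀ N A : WithLp 2 (H × H) →L[ℂ] WithLp 2 (H × H), IsStarNormal N →
      spectrum ℂ N ⊆ F → IsSelfAdjoint A → ‖A‖ = 1 → ‖N * A - A * N‖ ≤ δ →
      ‖cfc f N * A - A * cfc f N‖ ≤ K)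
    {N₁ N₂ : H →L[ℂ] H} (h₁ : IsStarNormal N₁) (h₂ : IsStarNormal N₂)
    (hs₁ : spectrum ℂ N₁ ⊆ F) (hs₂ : spectrum ℂ N₂ ⊆ F) (hd : ‖N₁ - N₂‖ ≤ δ) :
    ‖cfc f N₁ - cfc f N₂‖ ≤ K := by
  rcases subsingleton_or_nontrivial H with _ | _
  · simpa [Subsingleton.elim (cfc f N₁ - cfc f N₂) 0] using hK
  have hs : spectrum ℂ N₁ ∪ spectrum ℂ N₂ ⊆ F := Set.union_subset hs₁ hs₂
  have key := hcomm (blockDiag N₁ N₂) withLpSwap (isStarNormal_blockDiag h₁ h₂)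
    ((spectrum_blockDiag_subset N₁ N₂).trans hs) isSelfAdjoint_withLpSwap
    (CStarRing.norm_of_mem_unitary withLpSwap_mem_unitary)
    (by rwa [norm_blockDiag_commutator_withLpSwap])
  rwa [cfc_blockDiag f h₁ h₂ (hf.mono hs), norm_blockDiag_commutator_withLpSwap] at key

end BlockDiagonal

lemma mul_sub_mul_eq_of_mul_eq_one {R : Type*} [Ring R] {b c : R} (hbc : b * c = 1)
    (hcb : c * b = 1) (x : R) : x * c - c * x = c * (b * x - x * b) * c := by
  calc x * c - c * x = (c * b) * x * c - c * x * (b * c) := by rw [hbc, hcb, one_mul, mul_one]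
    _ = c * (b * x - x * b) * c := by noncomm_ring

lemma star_mul_self_one_sub_four_I_mul_inv (x : ℝ) :
    star (1 - 4 * I * ((x : ℂ) + 2 * I)⁻¹) * (1 - 4 * I * ((x : ℂ) + 2 * I)⁻¹) = 1 := by
  have h₁ : (x : ℂ) + 2 * I ≠ 0 := fun h => by simpa using congr(($h).im)
  have h₂ : (x : ℂ) - 2 * I ≠ 0 := fun h => by simpa using congr(($h).im)
  have e : 1 - 4 * I * ((x : ℂ) + 2 * I)⁻¹ = ((x : ℂ) - 2 * I) / ((x : ℂ) + 2 * I) := by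
    rw [eq_div_iff h₁, sub_mul, mul_assoc, inv_mul_cancel₀ h₁]
    ring
  have e' : star (((x : ℂ) - 2 * I) / ((x : ℂ) + 2 * I)) =
      ((x : ℂ) + 2 * I) / ((x : ℂ) - 2 * I) := by
    simp [conj_ofReal, conj_I, sub_eq_add_neg]
  rw [e, e', div_mul_div_comm, mul_comm, div_self (mul_ne_zero h₂ h₁)]

section Cayley

variable {A : Type*} [CStarAlgebra A] {a : A}

-- The Cayley transform `(a - 2i)(a + 2i)⁻¹`, written as `1 - 4i (a + 2i)⁻¹`.
noncomputable def cayley (a : A) : A := 1 - (4 * I) • cfc (fun z : ℂ => (z + 2 * I)⁻¹) a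

lemma add_two_I_ne_zero_of_mem_spectrum (ha : IsSelfAdjoint a) {z : ℂ} (hz : z ∈ spectrum ℂ a) :
    z + 2 * I ≠ 0 := fun h => by
  rw [ha.mem_spectrum_eq_re hz] at h
  simpa using congr(($h).im)

lemma continuousOn_inv_add_two_I (ha : IsSelfAdjoint a) :
    ContinuousOn (fun z : ℂ => (z + 2 * I)⁻¹) (spectrum ℂ a) :=
  (continuousOn_id.add continuousOn_const).inv₀ fun _ => add_two_I_ne_zero_of_mem_spectrum ha

lemma add_algebraMap_two_I_mul_cfc_inv (ha : IsSelfAdjoint a) :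
    (a + algebraMap ℂ A (2 * I)) * cfc (fun z : ℂ => (z + 2 * I)⁻¹) a = 1 ∧
      cfc (fun z : ℂ => (z + 2 * I)⁻¹) a * (a + algebraMap ℂ A (2 * I)) = 1 := by
  rw [← cfc_id' ℂ a, ← cfc_add_const (2 * I) (fun z => z) a, cfc_id' ℂ a, ← cfc_one ℂ a,
    ← cfc_mul (fun z : ℂ => z + 2 * I) _ a (by fun_prop) (continuousOn_inv_add_two_I ha),
    ← cfc_mul _ (fun z : ℂ => z + 2 * I) a (continuousOn_inv_add_two_I ha) (by fun_prop)]
  exact ⟨cfc_congr fun z hz => mul_inv_cancel₀ (add_two_I_ne_zero_of_mem_spectrum ha hz),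
    cfc_congr fun z hz => inv_mul_cancel₀ (add_two_I_ne_zero_of_mem_spectrum ha hz)⟩

lemma cayley_mem_unitary (ha : IsSelfAdjoint a) : cayley a ∈ unitary A := by
  have hcont : ContinuousOn (fun z : ℂ => 4 * I * (z + 2 * I)⁻¹) (spectrum ℂ a) :=
    continuousOn_const.mul (continuousOn_inv_add_two_I ha)
  have hcfc : cayley a = cfc (fun z : ℂ => 1 - 4 * I * (z + 2 * I)⁻¹) a := by
    rw [cfc_sub (fun _ => (1 : ℂ)) _ a continuousOn_const hcont,
      cfc_const_mul (4 * I) _ a (continuousOn_inv_add_two_I ha), cfc_const_one ℂ a, cayley]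
  rw [hcfc, cfc_unitary_iff (fun z : ℂ => 1 - 4 * I * (z + 2 * I)⁻¹) a ha.isStarNormal
    (continuousOn_const.sub hcont)]
  intro z hz
  rw [ha.mem_spectrum_eq_re hz]
  exact star_mul_self_one_sub_four_I_mul_inv z.re

lemma commutator_cayley (ha : IsSelfAdjoint a) (x : A) :
    x * cayley a - cayley a * x =
      (4 * I) • (cfc (fun z : ℂ => (z + 2 * I)⁻¹) a * (x * a - a * x) *
        cfc (fun z : ℂ => (z + 2 * I)⁻¹) a) := by
  obtain ⟨hbc, hcb⟩ := add_algebraMap_two_I_mul_cfc_inv ha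
  have hb : (a + algebraMap ℂ A (2 * I)) * x - x * (a + algebraMap ℂ A (2 * I)) =
      a * x - x * a := by
    rw [add_mul, mul_add, Algebra.commutes]
    abel
  rw [cayley, mul_sub, sub_mul, mul_one, one_mul, mul_smul_comm, smul_mul_assoc,
    sub_sub_sub_cancel_left, ← smul_sub, ← neg_sub, mul_sub_mul_eq_of_mul_eq_one hbc hcb, hb,
    ← neg_sub (x * a), mul_neg, neg_mul, neg_neg]

lemma norm_cfc_inv_add_two_I_le (ha : IsSelfAdjoint a) :
    ‖cfc (fun z : ℂ => (z + 2 * I)⁻¹) a‖ ≤ 1 / 2 := by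
  refine norm_cfc_le (by norm_num) fun z hz => ?_
  rw [ha.mem_spectrum_eq_re hz, norm_inv, one_div]
  refine inv_anti₀ (by norm_num) ?_
  simpa using Complex.abs_im_le_norm ((z.re : ℂ) + 2 * I)

lemma norm_add_algebraMap_two_I_le (ha : IsSelfAdjoint a) (ha1 : ‖a‖ ≤ 1) :
    ‖a + algebraMap ℂ A (2 * I)‖ ≤ √5 := by
  rw [← cfc_id' ℂ a, ← cfc_add_const (2 * I) (fun z => z) a]
  refine norm_cfc_le (by positivity) fun z hz => ?_
  have : Nontrivial A := not_subsingleton_iff_nontrivial.mp fun _ => by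
    simp [spectrum.of_subsingleton] at hz
  have hre : |z.re| ≤ 1 := by
    rw [← Real.norm_eq_abs, ← Complex.norm_real, ← ha.mem_spectrum_eq_re hz]
    exact (spectrum.norm_le_norm_of_mem hz).trans ha1
  rw [ha.mem_spectrum_eq_re hz, show (2 * I : ℂ) = ((2 : ℝ) : ℂ) * I by push_cast; ring,
    Complex.norm_add_mul_I]
  gcongr
  nlinarith [abs_le.mp hre]

lemma norm_commutator_cayley_le (ha : IsSelfAdjoint a) (x : A) :
    ‖x * cayley a - cayley a * x‖ ≤ ‖x * a - a * x‖ := by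
  have hc := norm_cfc_inv_add_two_I_le ha
  calc ‖x * cayley a - cayley a * x‖
      = 4 * ‖cfc (fun z : ℂ => (z + 2 * I)⁻¹) a * (x * a - a * x) *
          cfc (fun z : ℂ => (z + 2 * I)⁻¹) a‖ := by
        rw [commutator_cayley ha, norm_smul]
        simp
    _ ≤ 4 * (‖cfc (fun z : ℂ => (z + 2 * I)⁻¹) a‖ * ‖x * a - a * x‖ *
          ‖cfc (fun z : ℂ => (z + 2 * I)⁻¹) a‖) := by
        gcongr
        exact norm_mul₃_le
    _ ≤ 4 * (1 / 2 * ‖x * a - a * x‖ * (1 / 2)) := by gcongr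
    _ = ‖x * a - a * x‖ := by ring

lemma norm_commutator_le_of_cayley (ha : IsSelfAdjoint a) (ha1 : ‖a‖ ≤ 1) (x : A) :
    4 * ‖x * a - a * x‖ ≤ 5 * ‖x * cayley a - cayley a * x‖ := by
  obtain ⟨hbc, hcb⟩ := add_algebraMap_two_I_mul_cfc_inv ha
  set b := a + algebraMap ℂ A (2 * I)
  set c := cfc (fun z : ℂ => (z + 2 * I)⁻¹) a
  have hrec : (4 * I) • (x * a - a * x) = b * (x * cayley a - cayley a * x) * b := by
    rw [commutator_cayley ha, mul_smul_comm, smul_mul_assoc]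
    congr 1
    calc x * a - a * x = (b * c) * (x * a - a * x) * (c * b) := by rw [hbc, hcb, one_mul, mul_one]
      _ = b * (c * (x * a - a * x) * c) * b := by noncomm_ring
  have hb : ‖b‖ ^ 2 ≤ 5 := by
    calc ‖b‖ ^ 2 ≤ √5 ^ 2 := by gcongr; exact norm_add_algebraMap_two_I_le ha ha1
      _ = 5 := Real.sq_sqrt (by norm_num)
  calc 4 * ‖x * a - a * x‖ = ‖b * (x * cayley a - cayley a * x) * b‖ := by
        rw [← hrec, norm_smul]
        simp
    _ ≤ ‖b‖ * ‖x * cayley a - cayley a * x‖ * ‖b‖ := norm_mul₃_le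
    _ = ‖b‖ ^ 2 * ‖x * cayley a - cayley a * x‖ := by ring
    _ ≤ 5 * ‖x * cayley a - cayley a * x‖ := by gcongr

theorem norm_cfc_commutator_le_of_norm_cfc_sub_le {F : Set ℂ} {f : ℂ → ℂ}
    (hf : ContinuousOn f F) {δ K : ℝ}
    (hlip : ∀ N₁ N₂ : A, IsStarNormal N₁ → IsStarNormal N₂ → spectrum ℂ N₁ ⊆ F →
      spectrum ℂ N₂ ⊆ F → ‖N₁ - N₂‖ ≤ δ → ‖cfc f N₁ - cfc f N₂‖ ≤ K)
    {N : A} (hN : IsStarNormal N) (hs : spectrum ℂ N ⊆ F) (ha : IsSelfAdjoint a)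
    (ha1 : ‖a‖ ≤ 1) (hcomm : ‖N * a - a * N‖ ≤ δ) :
    4 * ‖cfc f N * a - a * cfc f N‖ ≤ 5 * K := by
  set u := cayley a
  have hu : u ∈ unitary A := cayley_mem_unitary ha
  let φ := Unitary.conjStarAlgAut ℂ A ⟨u, hu⟩
  have hφ : ∀ x, φ x = u * x * star u := fun _ => rfl
  have hcfc : φ (cfc f N) = cfc f (φ N) :=
    StarAlgHomClass.map_cfc φ f N (hf.mono hs) (StarAlgEquiv.isometry φ).continuous
  have hfu : ‖cfc f N * u - u * cfc f N‖ ≤ K := by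
    rw [← norm_sub_unitary_conj hu, ← hφ, hcfc]
    refine hlip N (φ N) hN inferInstance hs (by rwa [AlgEquiv.spectrum_eq φ N]) ?_
    rw [hφ, norm_sub_unitary_conj hu]
    exact (norm_commutator_cayley_le ha N).trans hcomm
  calc 4 * ‖cfc f N * a - a * cfc f N‖ ≤ 5 * ‖cfc f N * u - u * cfc f N‖ :=
        norm_commutator_le_of_cayley ha ha1 _
    _ ≤ 5 * K := by gcongr

end Cayley

theorem stmt_12_general (F : Set ℂ) (f : ℂ → ℂ) (hf : ContinuousOn f F)
    (δ : ℝ) (K : ℝ) (hK : 0 ≤ K) :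
    ((∀ (H : Type) [NormedAddCommGroup H] [InnerProductSpace ℂ H] [CompleteSpace H]
        (N A : H →L[ℂ] H), IsStarNormal N → spectrum ℂ N ⊆ F →
        IsSelfAdjoint A → ‖A‖ = 1 → ‖N * A - A * N‖ ≤ δ →
        ‖cfc f N * A - A * cfc f N‖ ≤ K) →
      (∀ (H : Type) [NormedAddCommGroup H] [InnerProductSpace ℂ H] [CompleteSpace H]
        (N₁ N₂ : H →L[ℂ] H), IsStarNormal N₁ → IsStarNormal N₂ →
        spectrum ℂ N₁ ⊆ F → spectrum ℂ N₂ ⊆ F → ‖N₁ - N₂‖ ≤ δ →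
        ‖cfc f N₁ - cfc f N₂‖ ≤ K))
    ∧
    ((∀ (H : Type) [NormedAddCommGroup H] [InnerProductSpace ℂ H] [CompleteSpace H]
        (N₁ N₂ : H →L[ℂ] H), IsStarNormal N₁ → IsStarNormal N₂ →
        spectrum ℂ N₁ ⊆ F → spectrum ℂ N₂ ⊆ F → ‖N₁ - N₂‖ ≤ δ →
        ‖cfc f N₁ - cfc f N₂‖ ≤ K) →
      (∀ (H : Type) [NormedAddCommGroup H] [InnerProductSpace ℂ H] [CompleteSpace H]
        (N A : H →L[ℂ] H), IsStarNormal N → spectrum ℂ N ⊆ F →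
        IsSelfAdjoint A → ‖A‖ = 1 → ‖N * A - A * N‖ ≤ δ →
        ‖cfc f N * A - A * cfc f N‖ ≤ 2 * K)) := by
  refine ⟨fun hcomm H _ _ _ N₁ N₂ h₁ h₂ hs₁ hs₂ hd => ?_,
    fun hlip H _ _ _ N A hN hs hA hA1 hcomm => ?_⟩
  · exact norm_cfc_sub_le_of_norm_cfc_commutator_le hf hK (hcomm (WithLp 2 (H × H)))
      h₁ h₂ hs₁ hs₂ hd
  · have := norm_cfc_commutator_le_of_norm_cfc_sub_le hf (hlip H) hN hs hA hA1.le hcomm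
    linarith

/-- Theorem 5.3 (Theorem `mcc`): `Ω_f ≤ Ω_f^{SA} ≤ 2 Ω_f`, stated pointwise:
(a) a uniform bound `K` on `‖f(N)A - Af(N)‖` over self-adjoint `A` of norm one with
`‖NA - AN‖ ≤ δ` yields `‖f(N₁) - f(N₂)‖ ≤ K` whenever `‖N₁ - N₂‖ ≤ δ`; (b) conversely,
a uniform bound `K` on `‖f(N₁) - f(N₂)‖` over `‖N₁ - N₂‖ ≤ δ` yields
`‖f(N)A - Af(N)‖ ≤ 2K` for such `A`. -/
theorem stmt_12 (F : Set ℂ) (hF : IsClosed F) (f : ℂ → ℂ) (hf : ContinuousOn f F)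
    (δ : ℝ) (hδ : 0 < δ) (K : ℝ) (hK : 0 ≤ K) :
    ((∀ (H : Type) [NormedAddCommGroup H] [InnerProductSpace ℂ H] [CompleteSpace H]
        (N A : H →L[ℂ] H), IsStarNormal N → spectrum ℂ N ⊆ F →
        IsSelfAdjoint A → ‖A‖ = 1 → ‖N * A - A * N‖ ≤ δ →
        ‖cfc f N * A - A * cfc f N‖ ≤ K) →
      (∀ (H : Type) [NormedAddCommGroup H] [InnerProductSpace ℂ H] [CompleteSpace H]
        (N₁ N₂ : H →L[ℂ] H), IsStarNormal N₁ → IsStarNormal N₂ →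
        spectrum ℂ N₁ ⊆ F → spectrum ℂ N₂ ⊆ F → ‖N₁ - N₂‖ ≤ δ →
        ‖cfc f N₁ - cfc f N₂‖ ≤ K))
    ∧
    ((∀ (H : Type) [NormedAddCommGroup H] [InnerProductSpace ℂ H] [CompleteSpace H]
        (N₁ N₂ : H →L[ℂ] H), IsStarNormal N₁ → IsStarNormal N₂ →
        spectrum ℂ N₁ ⊆ F → spectrum ℂ N₂ ⊆ F → ‖N₁ - N₂‖ ≤ δ →
        ‖cfc f N₁ - cfc f N₂‖ ≤ K) →
      (∀ (H : Type) [NormedAddCommGroup H] [InnerProductSpace ℂ H] [CompleteSpace H]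
        (N A : H →L[ℂ] H), IsStarNormal N → spectrum ℂ N ⊆ F →
        IsSelfAdjoint A → ‖A‖ = 1 → ‖N * A - A * N‖ ≤ δ →
        ‖cfc f N * A - A * cfc f N‖ ≤ 2 * K)) :=
  stmt_12_general F f hf δ K hK
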